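/- Under the MDP with Bernoulli treatments and the regularity assumptions, there is a constant K depending only on B and C such that for every i and every γ ∈ (0,1): | E_{μ(π_i=γ, π_{−i})}[Y_i] − E_{μ(π)}[a_i(Z_i) + b_i(Z_i)·γ] / E_{μ(π)}[1 − c_i(Z_i) − d_i(Z_i)·γ] | ≤ K·√(L_n), where Z_i = Σ_{j∈𝒩_i} Y_j, μ(π) is the stationary distribution of the chain with treatment probabilities π, and μ(π_i=γ, π_{−i}) is the stationary distribution of the chain in which the i-th treatment probability is replaced by γ. -/

import Mathlib

open Finset Filter Topology

noncomputable section

namespace MRT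

/-- The state space: binary outcomes for each of the `n` units. -/
abbrev State (n : ℕ) := Fin n → Bool

variable {n : ℕ}

/-- `zc Nbr y i` is `Z_i(y) = ∑_{j ∈ 𝒩_i} y_j`, the number of active neighbors of `i`. -/
def zc (Nbr : Fin n → Finset (Fin n)) (y : State n) (i : Fin n) : ℝ :=
  ∑ j ∈ Nbr i, (if y j then (1 : ℝ) else 0)

/-- Probability that coordinate `i` is `1` at the next step, starting from state `y`,
under Bernoulli(π i) treatments. -/
def succProb (Nbr : Fin n → Finset (Fin n)) (f : Fin n → Bool → Bool → ℝ → ℝ)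
    (π : Fin n → ℝ) (y : State n) (i : Fin n) : ℝ :=
  π i * f i (y i) true (zc Nbr y i) + (1 - π i) * f i (y i) false (zc Nbr y i)

/-- Transition kernel `P(π)` of the MDP with Bernoulli treatments. -/
def kernel (Nbr : Fin n → Finset (Fin n)) (f : Fin n → Bool → Bool → ℝ → ℝ)
    (π : Fin n → ℝ) (y y' : State n) : ℝ :=
  ∏ i, if y' i then succProb Nbr f π y i else 1 - succProb Nbr f π y i

/-- One-step pushforward `ν P(π)` of a distribution `ν` under the kernel. -/
def step (Nbr : Fin n → Finset (Fin n)) (f : Fin n → Bool → Bool → ℝ → ℝ)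
    (π : Fin n → ℝ) (ν : State n → ℝ) : State n → ℝ :=
  fun y' => ∑ y, ν y * kernel Nbr f π y y'

/-- `ν` is a probability distribution on `{0,1}^n`. -/
def IsDist (ν : State n → ℝ) : Prop := (∀ y, 0 ≤ ν y) ∧ ∑ y, ν y = 1

/-- `μ` is a stationary probability distribution for the kernel. -/
def IsStationary (Nbr : Fin n → Finset (Fin n)) (f : Fin n → Bool → Bool → ℝ → ℝ)
    (π : Fin n → ℝ) (μ : State n → ℝ) : Prop :=
  IsDist μ ∧ step Nbr f π μ = μ

/-- Expectation of `g` under the (finitely supported) distribution `ν`. -/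
def expect (ν : State n → ℝ) (g : State n → ℝ) : ℝ := ∑ y, ν y * g y

/-- `γ` is a coupling of `ν₁` and `ν₂`. -/
def IsCoupling (γ : State n × State n → ℝ) (ν₁ ν₂ : State n → ℝ) : Prop :=
  (∀ p, 0 ≤ γ p) ∧ (∀ x, ∑ y, γ (x, y) = ν₁ x) ∧ (∀ y, ∑ x, γ (x, y) = ν₂ y)

/-- `∑ i |x_i - y_i|` for binary vectors. -/
def hamming (x y : State n) : ℝ := ∑ i : Fin n, (if x i = y i then (0:ℝ) else 1)

/-- The `L1`-Wasserstein distance between two distributions on `{0,1}^n`. -/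
def WL1 (ν₁ ν₂ : State n → ℝ) : ℝ :=
  sInf {c | ∃ γ, IsCoupling γ ν₁ ν₂ ∧ c = ∑ p : State n × State n, γ p * hamming p.1 p.2}

/-- `∑_{j ∈ 𝒩_i} |x_j - y_j|` for binary vectors. -/
def nbrDiff (Nbr : Fin n → Finset (Fin n)) (i : Fin n) (x y : State n) : ℝ :=
  ∑ j ∈ Nbr i, (if x j = y j then (0:ℝ) else 1)

/-- The graph-dependent Wasserstein distance `W_{d_{E,k}}`. -/
def WdE (Nbr : Fin n → Finset (Fin n)) (k : ℕ) (ν₁ ν₂ : State n → ℝ) : ℝ :=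
  sInf {c | ∃ γ, IsCoupling γ ν₁ ν₂ ∧
    c = ⨆ i : Fin n,
      (∑ p : State n × State n, γ p * (nbrDiff Nbr i p.1 p.2) ^ k) ^ ((k : ℝ)⁻¹)}

/-- Multilinear extension of `f i` to probabilities `p, w ∈ [0,1]`:
`f_i(p,w,z) = a_i(z) + b_i(z) w + c_i(z) p + d_i(z) w p`. -/
def fext (f : Fin n → Bool → Bool → ℝ → ℝ) (i : Fin n) (p w z : ℝ) : ℝ :=
  f i false false z + (f i false true z - f i false false z) * w +
    (f i true false z - f i false false z) * p +
    (f i true true z - f i false true z - f i true false z + f i false false z) * w * p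

/-- `Q_i = ∑_{j ∈ 𝒩_i} P_j`. -/
def mfQ (Nbr : Fin n → Finset (Fin n)) (P : Fin n → ℝ) (i : Fin n) : ℝ := ∑ j ∈ Nbr i, P j

/-- One step of the mean-field dynamical system. -/
def mfStep (Nbr : Fin n → Finset (Fin n)) (f : Fin n → Bool → Bool → ℝ → ℝ)
    (π : Fin n → ℝ) (P : Fin n → ℝ) : Fin n → ℝ :=
  fun i => fext f i (P i) (π i) (mfQ Nbr P i)

/-- `P` is a fixed point of the mean-field dynamical system, lying in `[0,1]^n`. -/
def IsMFFixed (Nbr : Fin n → Finset (Fin n)) (f : Fin n → Bool → Bool → ℝ → ℝ)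
    (π : Fin n → ℝ) (P : Fin n → ℝ) : Prop :=
  (∀ i, P i ∈ Set.Icc (0:ℝ) 1) ∧ mfStep Nbr f π P = P

/-- Law of a vector of independent Bernoulli(P i) coordinates. -/
def prodLaw (P : Fin n → ℝ) (y : State n) : ℝ := ∏ i, if y i then P i else 1 - P i

/-- Probability of the treatment vector `w` under independent Bernoulli(π i). -/
def wProb (π : Fin n → ℝ) (w : State n) : ℝ := ∏ i, if w i then π i else 1 - π i

/-- Conditional probability of the next state `y'` given state `y` and treatments `w`. -/
def condProb (Nbr : Fin n → Finset (Fin n)) (f : Fin n → Bool → Bool → ℝ → ℝ)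
    (y w y' : State n) : ℝ :=
  ∏ i, if y' i then f i (y i) (w i) (zc Nbr y i) else 1 - f i (y i) (w i) (zc Nbr y i)

/-- Probability of the trajectory `(Y_1, …, Y_{T+1}; W_1, …, W_T)` (indexed from `0` in Lean)
of the MDP with Bernoulli treatments, with initial distribution `ν₀`. -/
def trajProb (Nbr : Fin n → Finset (Fin n)) (f : Fin n → Bool → Bool → ℝ → ℝ)
    (π : Fin n → ℝ) (T : ℕ) (ν₀ : State n → ℝ)
    (Y : Fin (T + 1) → State n) (W : Fin T → State n) : ℝ :=
  ν₀ (Y 0) * ∏ t : Fin T, wProb π (W t) * condProb Nbr f (Y t.castSucc) (W t) (Y t.succ)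

/-- The estimator `f̂_i(y,w)` computed from the trajectory (convention `0/0 = 0`,
which is Lean's division). -/
def fhat {T : ℕ} (Y : Fin (T + 1) → State n) (W : Fin T → State n)
    (i : Fin n) (y w : Bool) : ℝ :=
  (∑ t : Fin T, if Y t.castSucc i = y ∧ W t i = w then (if Y t.succ i then (1:ℝ) else 0) else 0) /
  (∑ t : Fin T, if Y t.castSucc i = y ∧ W t i = w then (1:ℝ) else 0)

/-- The undirected-graph structure: symmetric neighborhoods without self-loops. -/
def GoodGraph (Nbr : Fin n → Finset (Fin n)) : Prop :=
  (∀ i j, i ∈ Nbr j ↔ j ∈ Nbr i) ∧ ∀ i, i ∉ Nbr i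

/-- `f` takes values strictly between 0 and 1. -/
def PosF (f : Fin n → Bool → Bool → ℝ → ℝ) : Prop :=
  ∀ i y w z, 0 ≤ z → f i y w z ∈ Set.Ioo (0:ℝ) 1

/-- The regularity assumptions: `L`-Lipschitzness in the third argument, the bound `B` on
the effect of the first argument, maximal degree `D`, and the contraction condition
`B + L·D ≤ C < 1`. -/
def Regular (Nbr : Fin n → Finset (Fin n)) (f : Fin n → Bool → Bool → ℝ → ℝ)
    (L B : ℝ) (D : ℕ) (C : ℝ) : Prop :=
  0 ≤ L ∧
  (∀ i y w z₁ z₂, 0 ≤ z₁ → 0 ≤ z₂ → |f i y w z₁ - f i y w z₂| ≤ L * |z₁ - z₂|) ∧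
  (∀ i w z, 0 ≤ z → |f i true w z - f i false w z| ≤ B) ∧
  (∀ i, (Nbr i).card ≤ D) ∧
  B + L * D ≤ C ∧ C < 1

/-- Adjacency matrix of the interference graph. -/
def adjMat (Nbr : Fin n → Finset (Fin n)) : Matrix (Fin n) (Fin n) ℝ :=
  Matrix.of fun i j => if j ∈ Nbr i then (1:ℝ) else 0


/-- Indicator of `Y_i = 1` as a real-valued function of the state. -/
def Yi (i : Fin n) (s : State n) : ℝ := if s i then 1 else 0

/-- `a_i(z) = f_i(0,0,z)`. -/
def aF (f : Fin n → Bool → Bool → ℝ → ℝ) (i : Fin n) (z : ℝ) : ℝ := f i false false z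

/-- `b_i(z) = f_i(0,1,z) - f_i(0,0,z)`. -/
def bF (f : Fin n → Bool → Bool → ℝ → ℝ) (i : Fin n) (z : ℝ) : ℝ :=
  f i false true z - f i false false z

/-- `c_i(z) = f_i(1,0,z) - f_i(0,0,z)`. -/
def cF (f : Fin n → Bool → Bool → ℝ → ℝ) (i : Fin n) (z : ℝ) : ℝ :=
  f i true false z - f i false false z

/-- `d_i(z) = f_i(1,1,z) - f_i(0,1,z) - f_i(1,0,z) + f_i(0,0,z)`. -/
def dF (f : Fin n → Bool → Bool → ℝ → ℝ) (i : Fin n) (z : ℝ) : ℝ :=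
  f i true true z - f i false true z - f i true false z + f i false false z

/-- `â_i` computed from the trajectory. -/
def ahat {T : ℕ} (Y : Fin (T + 1) → State n) (W : Fin T → State n) (i : Fin n) : ℝ :=
  fhat Y W i false false

/-- `b̂_i` computed from the trajectory. -/
def bhat {T : ℕ} (Y : Fin (T + 1) → State n) (W : Fin T → State n) (i : Fin n) : ℝ :=
  fhat Y W i false true - fhat Y W i false false

/-- `ĉ_i` computed from the trajectory. -/
def chat {T : ℕ} (Y : Fin (T + 1) → State n) (W : Fin T → State n) (i : Fin n) : ℝ :=
  fhat Y W i true false - fhat Y W i false false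

/-- `d̂_i` computed from the trajectory. -/
def dhat {T : ℕ} (Y : Fin (T + 1) → State n) (W : Fin T → State n) (i : Fin n) : ℝ :=
  fhat Y W i true true + fhat Y W i false false - fhat Y W i false true - fhat Y W i true false

/-- The plug-in estimator `τ̂_LDE(γ₁, γ₂)` of the long-term direct effect. -/
def ldeHat {T : ℕ} (Y : Fin (T + 1) → State n) (W : Fin T → State n) (γ₁ γ₂ : ℝ) : ℝ :=
  (1 / (n : ℝ)) * ∑ i : Fin n,
    ((ahat Y W i + bhat Y W i * γ₁) / (1 - chat Y W i - dhat Y W i * γ₁) -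
      (ahat Y W i + bhat Y W i * γ₂) / (1 - chat Y W i - dhat Y W i * γ₂))

/-- `P̂_i = (1/T) ∑_{t=1}^T Y_{it}`. -/
def Phat {T : ℕ} (Y : Fin (T + 1) → State n) (i : Fin n) : ℝ :=
  (∑ t : Fin T, if Y t.castSucc i then (1 : ℝ) else 0) / T

/-- The regression estimator `f̂'_i(y,w)_{δ_T}` of the derivative of `f_i` in its third
argument, computed from the trajectory (`Dr` is the degree bound `D_n`, `δ` is `δ_T`). -/
def fhatD (Nbr : Fin n → Finset (Fin n)) {T : ℕ}
    (Y : Fin (T + 1) → State n) (W : Fin T → State n)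
    (i : Fin n) (y w : Bool) (Dr δ : ℝ) : ℝ :=
  let ind : Fin T → ℝ := fun t => if Y t.castSucc i = y ∧ W t i = w then 1 else 0
  let cnt : ℝ := ∑ t, ind t
  let Ybar : ℝ := (∑ t, ind t * (if Y t.succ i then (1 : ℝ) else 0)) / cnt
  let Zbar : ℝ := (∑ t, ind t * zc Nbr (Y t.castSucc) i) / cnt
  (∑ t, ind t * ((if Y t.succ i then (1 : ℝ) else 0) - Ybar) * (zc Nbr (Y t.castSucc) i - Zbar)) /
    max (Dr * T * δ) (∑ t, ind t * (zc Nbr (Y t.castSucc) i - Zbar) ^ 2)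

/-- The plug-in estimator `τ̂_LTE(π + Δv, π)/Δ = (1/n)·𝟙ᵀ(M_η − D̂A − Ŵ_κ)⁻¹ û`
of the (rescaled) long-term total effect. -/
def lteHatOverDelta (Nbr : Fin n → Finset (Fin n)) (π v : Fin n → ℝ) {T : ℕ}
    (Y : Fin (T + 1) → State n) (W : Fin T → State n) (Dn : ℕ) (δ η κ : ℝ) : ℝ :=
  let Dh : Fin n → ℝ := fun i =>
    (1 - π i) * (1 - Phat Y i) * fhatD Nbr Y W i false false Dn δ +
      π i * (1 - Phat Y i) * fhatD Nbr Y W i false true Dn δ +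
      Phat Y i * (1 - π i) * fhatD Nbr Y W i true false Dn δ +
      Phat Y i * π i * fhatD Nbr Y W i true true Dn δ
  let ω : Fin n → ℝ := fun i => min (1 - κ) (chat Y W i + dhat Y W i * π i)
  let u : Fin n → ℝ := fun i => (bhat Y W i + dhat Y W i * Phat Y i) * v i
  let Mη : Matrix (Fin n) (Fin n) ℝ :=
    Matrix.diagonal fun i => max 1 (Dh i * Dn / (1 - η) + ω i)
  (1 / (n : ℝ)) *
    ∑ i : Fin n, ((Mη - Matrix.diagonal Dh * adjMat Nbr - Matrix.diagonal ω)⁻¹.mulVec u) i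

end MRT


end

/-!
Let `X` be the stationary mean of `Y_i` when unit `i` is treated with probability `γ`. Given
the current state, unit `i` is active at the next step with probability `m(Z_i) + g(Z_i) Y_i`,
where `m = a_i + b_i γ`, `g = c_i + d_i γ`, and `Z_i` does not involve `Y_i`. Stationarity
gives `X = E'[m] + E'[g] X + Cov'(g, Y_i)`, so `|X - E[m] / (1 - E[g])|` is at most
`|E'[m] - E[m]| + |E'[g] - E[g]| + |Cov'(g, Y_i)|` divided by `1 - E[g] ≥ 1 - C`.

These three terms are controlled through coordinatewise Lipschitz constants `c`
(`|h x - h y| ≤ ∑ c_l 1[x_l ≠ y_l]`). Functions of `Z_i` have constants of size `L` on the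
neighbours of `i`, hence `‖c‖₂ ≤ 2√L`. One step of the chain turns constants `c` into `cᵀ A`
with `A = B·I + L·Adj`, whose row and column sums are at most `C < 1`, so `A` contracts both
`ℓ¹` and `ℓ²`. Iterating, changing one treatment probability moves stationary means by at most
`‖c‖₂ / (1 - C)`, and the Efron–Stein inequality for the one-step product law bounds stationary
variances by `‖c‖₂² / (4 (1 - C²))`. Since the next `Z_i` and `Y_i` are conditionally
independent given the state, the covariance equals that of their one-step means, which
Cauchy–Schwarz bounds.
-/

noncomputable section

namespace MRT

open scoped Matrix

lemma abs_convexComb_sub_le {w a b a' b' K : ℝ} (hw : w ∈ Set.Icc (0 : ℝ) 1)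
    (ha : |a - a'| ≤ K) (hb : |b - b'| ≤ K) :
    |(w * a + (1 - w) * b) - (w * a' + (1 - w) * b')| ≤ K := by
  have hw' : 0 ≤ 1 - w := sub_nonneg.2 hw.2
  calc |(w * a + (1 - w) * b) - (w * a' + (1 - w) * b')|
      = |w * (a - a') + (1 - w) * (b - b')| := by ring_nf
    _ ≤ w * |a - a'| + (1 - w) * |b - b'| := by
        refine (abs_add_le _ _).trans_eq ?_
        rw [abs_mul, abs_mul, abs_of_nonneg hw.1, abs_of_nonneg hw']
    _ ≤ w * K + (1 - w) * K := by gcongr; exact hw.1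
    _ = K := by ring

lemma le_of_forall_le_add_mul_pow {x a b r : ℝ} (hr₀ : 0 ≤ r) (hr₁ : r < 1)
    (h : ∀ m : ℕ, x ≤ a + b * r ^ m) : x ≤ a := by
  have hlim : Tendsto (fun m : ℕ => a + b * r ^ m) atTop (𝓝 (a + b * 0)) :=
    tendsto_const_nhds.add ((tendsto_pow_atTop_nhds_zero_of_lt_one hr₀ hr₁).const_mul b)
  rw [mul_zero, add_zero] at hlim
  exact ge_of_tendsto' hlim h

lemma abs_sub_div_one_sub_le {X a a' g g' m C : ℝ} (hX : X ∈ Set.Icc (0 : ℝ) 1)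
    (hg : g ≤ C) (hC : C < 1) (hfix : X = a' + m) :
    |X - a / (1 - g)| ≤ (|a' - a| + |g' - g| + |m - g' * X|) / (1 - C) := by
  have hg₁ : 0 < 1 - g := by linarith
  have hnum : X - a / (1 - g) = ((a' - a) + X * (g' - g) + (m - g' * X)) / (1 - g) := by
    field_simp
    linear_combination hfix
  have hXg : |X * (g' - g)| ≤ |g' - g| := by
    rw [abs_mul, abs_of_nonneg hX.1]
    exact mul_le_of_le_one_left (abs_nonneg _) hX.2
  have hN : |(a' - a) + X * (g' - g) + (m - g' * X)| ≤ |a' - a| + |g' - g| + |m - g' * X| :=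
    (abs_add_le _ _).trans (by linarith [abs_add_le (a' - a) (X * (g' - g))])
  rw [hnum, abs_div, abs_of_pos hg₁]
  exact div_le_div₀ (by positivity) hN (by linarith) (by linarith)

section SchurTest

variable {ι : Type*} [Fintype ι] {M : Matrix ι ι ℝ} {r : ℝ}

lemma sum_vecMul_le (hrow : ∀ j, ∑ l, M j l ≤ r) {c : ι → ℝ} (hc : ∀ j, 0 ≤ c j) :
    ∑ l, (c ᵥ* M) l ≤ r * ∑ j, c j := by
  simp only [Matrix.vecMul, dotProduct]
  rw [sum_comm, mul_sum]
  refine sum_le_sum fun j _ => ?_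
  rw [← mul_sum, mul_comm r]
  exact mul_le_mul_of_nonneg_left (hrow j) (hc j)

/-- Schur test. -/
lemma sum_vecMul_sq_le (hM : ∀ j l, 0 ≤ M j l) (hrow : ∀ j, ∑ l, M j l ≤ r)
    (hcol : ∀ l, ∑ j, M j l ≤ r) (c : ι → ℝ) :
    ∑ l, (c ᵥ* M) l ^ 2 ≤ r ^ 2 * ∑ j, c j ^ 2 := by
  rcases isEmpty_or_nonempty ι with hι | ⟨⟨j₀⟩⟩
  · simp
  have hr : 0 ≤ r := (sum_nonneg fun l _ => hM j₀ l).trans (hrow j₀)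
  have hMc : ∀ j l, 0 ≤ M j l * c j ^ 2 := fun j l => mul_nonneg (hM j l) (sq_nonneg _)
  have hcs : ∀ l, (c ᵥ* M) l ^ 2 ≤ r * ∑ j, M j l * c j ^ 2 := fun l =>
    (sum_sq_le_sum_mul_sum_of_sq_le_mul univ (r := fun j => c j * M j l)
      (fun j _ => hM j l) (fun j _ => hMc j l) fun j _ => le_of_eq (by ring)).trans
      (mul_le_mul_of_nonneg_right (hcol l) (sum_nonneg fun j _ => hMc j l))
  calc ∑ l, (c ᵥ* M) l ^ 2 ≤ ∑ l, r * ∑ j, M j l * c j ^ 2 := sum_le_sum fun l _ => hcs l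
    _ = r * ∑ j, (∑ l, M j l) * c j ^ 2 := by
        rw [← mul_sum, sum_comm]; simp only [sum_mul]
    _ ≤ r * ∑ j, r * c j ^ 2 := by gcongr with j; exact hrow j
    _ = r ^ 2 * ∑ j, c j ^ 2 := by rw [← mul_sum]; ring

end SchurTest

variable {n : ℕ} {Nbr : Fin n → Finset (Fin n)} {f : Fin n → Bool → Bool → ℝ → ℝ}
  {L B C : ℝ} {D : ℕ} {π p q c : Fin n → ℝ} {μ μ' ν g u : State n → ℝ} {i j : Fin n} {γ : ℝ}

section Expectation

lemma expect_add : expect ν (fun y => g y + u y) = expect ν g + expect ν u := by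
  simp only [expect, mul_add, sum_add_distrib]

lemma expect_sub : expect ν (fun y => g y - u y) = expect ν g - expect ν u := by
  simp only [expect, mul_sub, sum_sub_distrib]

lemma expect_const_mul (a : ℝ) : expect ν (fun y => a * g y) = a * expect ν g := by
  simp only [expect, mul_sum]
  exact sum_congr rfl fun y _ => by ring

lemma IsDist.expect_const (hν : IsDist ν) (a : ℝ) : expect ν (fun _ => a) = a := by
  simp only [expect, ← sum_mul, hν.2, one_mul]

lemma IsDist.expect_mono (hν : IsDist ν) (h : ∀ y, g y ≤ u y) : expect ν g ≤ expect ν u :=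
  sum_le_sum fun y _ => mul_le_mul_of_nonneg_left (h y) (hν.1 y)

lemma IsDist.abs_expect_le (hν : IsDist ν) {M : ℝ} (h : ∀ y, |g y| ≤ M) :
    |expect ν g| ≤ M := by
  rw [abs_le]
  constructor
  · simpa only [hν.expect_const] using hν.expect_mono fun y => neg_le_of_abs_le (h y)
  · simpa only [hν.expect_const] using hν.expect_mono fun y => le_of_abs_le (h y)

lemma IsDist.expect_Yi_mem_Icc (hν : IsDist ν) (i : Fin n) :
    expect ν (Yi i) ∈ Set.Icc (0 : ℝ) 1 := by
  have h := hν.abs_expect_le (g := fun y => Yi i y - 1 / 2) (M := 1 / 2) fun y => by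
    unfold Yi; split_ifs <;> norm_num
  rw [expect_sub, hν.expect_const, abs_le] at h
  constructor <;> linarith [h.1, h.2]

end Expectation

section ProductLaw

lemma sum_prodLaw (p : Fin n → ℝ) : ∑ y, prodLaw p y = 1 := by
  simp only [prodLaw, ← Fintype.prod_sum (fun i (b : Bool) => if b then p i else 1 - p i),
    Fintype.sum_bool, if_true, Bool.false_eq_true, if_false, add_sub_cancel, prod_const_one]

lemma isDist_prodLaw (hp : ∀ j, p j ∈ Set.Icc (0 : ℝ) 1) : IsDist (prodLaw p) :=
  ⟨fun y => prod_nonneg fun j _ => by split_ifs <;> linarith [(hp j).1, (hp j).2],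
    sum_prodLaw p⟩

def avgAt (p : Fin n → ℝ) (j : Fin n) (g : State n → ℝ) (y : State n) : ℝ :=
  p j * g (Function.update y j true) + (1 - p j) * g (Function.update y j false)

lemma avgAt_update (j : Fin n) (g : State n → ℝ) (y : State n) (b : Bool) :
    avgAt p j g (Function.update y j b) = avgAt p j g y := by
  simp only [avgAt, Function.update_idem]

lemma sum_update_true_add_update_false (j : Fin n) (F : State n → ℝ) :
    ∑ y, (F (Function.update y j true) + F (Function.update y j false)) = 2 * ∑ y, F y := by
  have hflip : Function.Involutive fun y : State n => Function.update y j (!y j) := fun y => by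
    simp [Function.update_idem]
  have hpair : ∀ y, F (Function.update y j true) + F (Function.update y j false) =
      F y + F (Function.update y j (!y j)) := by
    intro y
    have hy := Function.update_eq_self j y
    cases hyj : y j <;> rw [hyj] at hy <;> simp [hy, add_comm]
  rw [sum_congr rfl fun y _ => hpair y, sum_add_distrib, two_mul]
  exact congrArg _ (Equiv.sum_comp (hflip.toPerm _) F)

lemma prodLaw_update (j : Fin n) (y : State n) (b : Bool) :
    prodLaw p (Function.update y j b) =
      (if b then p j else 1 - p j) * ∏ l ∈ univ.erase j, if y l then p l else 1 - p l := by
  rw [prodLaw, ← mul_prod_erase univ _ (mem_univ j), Function.update_self]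
  congr 1
  exact prod_congr rfl fun l hl => by rw [Function.update_of_ne (ne_of_mem_erase hl)]

lemma expect_avgAt (j : Fin n) (g : State n → ℝ) :
    expect (prodLaw p) (avgAt p j g) = expect (prodLaw p) g := by
  have half : ∀ F : State n → ℝ, ∑ y, F y =
      (∑ y, (F (Function.update y j true) + F (Function.update y j false))) / 2 := by
    intro F; rw [sum_update_true_add_update_false]; ring
  rw [expect, expect, half, half (fun y => prodLaw p y * g y)]
  congr 1
  refine sum_congr rfl fun y _ => ?_
  simp only [avgAt_update, prodLaw_update, if_true, Bool.false_eq_true, if_false]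
  simp only [avgAt]
  ring

lemma dependsOn_avgAt {s : Set (Fin n)} (hg : DependsOn g s) (j : Fin n) :
    DependsOn (avgAt p j g) (s \ {j}) := by
  intro x y hxy
  have hupd : ∀ b, g (Function.update x j b) = g (Function.update y j b) := fun b =>
    hg fun l hl => by
      rcases eq_or_ne l j with rfl | hlj
      · simp
      · simp [Function.update_of_ne hlj, hxy l ⟨hl, hlj⟩]
  simp only [avgAt, hupd]

lemma expect_foldr_avgAt (g : State n → ℝ) (js : List (Fin n)) :
    expect (prodLaw p) (js.foldr (avgAt p) g) = expect (prodLaw p) g := by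
  induction js with
  | nil => rfl
  | cons j js ih => rw [List.foldr_cons, expect_avgAt, ih]

lemma dependsOn_foldr_avgAt (g : State n → ℝ) (js : List (Fin n)) :
    DependsOn (js.foldr (avgAt p) g) {l | l ∉ js} := by
  induction js with
  | nil => simpa using dependsOn_univ g
  | cons j js ih => exact (dependsOn_avgAt ih j).mono fun l hl => by simp_all

lemma foldr_avgAt_finRange (hp : ∀ j, p j ∈ Set.Icc (0 : ℝ) 1) (g : State n → ℝ)
    (y : State n) : (List.finRange n).foldr (avgAt p) g y = expect (prodLaw p) g := by
  have hconst := (dependsOn_foldr_avgAt (p := p) g (List.finRange n)).mono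
    (t := ∅) fun l hl => by simp at hl
  rw [← expect_foldr_avgAt g (List.finRange n), ← (isDist_prodLaw hp).expect_const
    ((List.finRange n).foldr (avgAt p) g y)]
  exact sum_congr rfl fun z _ => by rw [hconst.empty z y]

lemma expect_prodLaw_mul_Yi (hg : DependsOn g ({i}ᶜ : Set (Fin n))) :
    expect (prodLaw p) (fun y => g y * Yi i y) = p i * expect (prodLaw p) g := by
  have hupd : ∀ y b, g (Function.update y i b) = g y := fun y b =>
    hg fun l hl => Function.update_of_ne hl _ _
  rw [← expect_avgAt i, ← expect_const_mul]
  congr 1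
  funext y
  simp [avgAt, Yi, hupd]

lemma expect_prodLaw_Yi (i : Fin n) : expect (prodLaw p) (Yi i) = p i := by
  simpa [expect, sum_prodLaw] using expect_prodLaw_mul_Yi (p := p) (g := fun _ => 1)
    ((dependsOn_const (1 : ℝ)).mono (Set.empty_subset {i}ᶜ))

end ProductLaw

section CoordLipschitz

def mismatch (x y : State n) (l : Fin n) : ℝ := if x l = y l then 0 else 1

def CoordLipschitzWith (c : Fin n → ℝ) (g : State n → ℝ) : Prop :=
  ∀ x y, |g x - g y| ≤ ∑ l, c l * mismatch x y l

lemma mismatch_nonneg (x y : State n) (l : Fin n) : 0 ≤ mismatch x y l := by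
  unfold mismatch; split_ifs <;> norm_num

lemma mismatch_le_one (x y : State n) (l : Fin n) : mismatch x y l ≤ 1 := by
  unfold mismatch; split_ifs <;> norm_num

lemma coordLipschitzWith_Yi (i : Fin n) : CoordLipschitzWith (Pi.single i 1) (Yi i) := by
  intro x y
  rw [sum_eq_single i (fun l _ hl => by simp [hl]) (by simp)]
  cases hx : x i <;> cases hy : y i <;> simp [Yi, mismatch, hx, hy]

lemma CoordLipschitzWith.abs_sub_le_sum (hg : CoordLipschitzWith c g) (hc : ∀ l, 0 ≤ c l)
    (x y : State n) : |g x - g y| ≤ ∑ l, c l :=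
  (hg x y).trans <| sum_le_sum fun l _ => mul_le_of_le_one_right (hc l) (mismatch_le_one x y l)

lemma CoordLipschitzWith.abs_sub_update_le (hg : CoordLipschitzWith c g) (y : State n)
    (j : Fin n) : |g (Function.update y j true) - g (Function.update y j false)| ≤ c j := by
  refine (hg _ _).trans_eq ?_
  rw [sum_eq_single j (fun l _ hl => by simp [mismatch, Function.update_of_ne hl]) (by simp)]
  simp [mismatch]

lemma CoordLipschitzWith.avgAt (hg : CoordLipschitzWith c g) (hc : ∀ l, 0 ≤ c l)
    (hp : p j ∈ Set.Icc (0 : ℝ) 1) : CoordLipschitzWith c (MRT.avgAt p j g) := by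
  intro x y
  have hupd : ∀ b, |g (Function.update x j b) - g (Function.update y j b)| ≤
      ∑ l, c l * mismatch x y l := fun b =>
    (hg _ _).trans <| sum_le_sum fun l _ => mul_le_mul_of_nonneg_left (by
      rcases eq_or_ne l j with rfl | hlj
      · simpa [mismatch] using mismatch_nonneg x y l
      · simp [mismatch, Function.update_of_ne hlj]) (hc l)
  exact abs_convexComb_sub_le hp (hupd true) (hupd false)

lemma CoordLipschitzWith.foldr_avgAt (hg : CoordLipschitzWith c g) (hc : ∀ l, 0 ≤ c l)
    (hp : ∀ j, p j ∈ Set.Icc (0 : ℝ) 1) (js : List (Fin n)) :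
    CoordLipschitzWith c (js.foldr (MRT.avgAt p) g) := by
  induction js with
  | nil => exact hg
  | cons j js ih => exact ih.avgAt hc (hp j)

lemma CoordLipschitzWith.abs_expect_prodLaw_sub_le (hg : CoordLipschitzWith c g)
    (hc : ∀ l, 0 ≤ c l) (hp : ∀ j, p j ∈ Set.Icc (0 : ℝ) 1)
    (hq : ∀ j, q j ∈ Set.Icc (0 : ℝ) 1) :
    |expect (prodLaw p) g - expect (prodLaw q) g| ≤ ∑ j, c j * |p j - q j| := by
  have key : ∀ (js : List (Fin n)) y,
      |js.foldr (MRT.avgAt p) g y - js.foldr (MRT.avgAt q) g y| ≤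
        (js.map fun j => c j * |p j - q j|).sum := by
    intro js
    induction js with
    | nil => simp
    | cons j js ih =>
      intro y
      set G := js.foldr (MRT.avgAt p) g
      set H := js.foldr (MRT.avgAt q) g
      have hH := (hg.foldr_avgAt hc hq js).abs_sub_update_le y j
      have hsplit : MRT.avgAt p j G y - MRT.avgAt q j H y =
          p j * (G (Function.update y j true) - H (Function.update y j true)) +
          (1 - p j) * (G (Function.update y j false) - H (Function.update y j false)) +
          (p j - q j) * (H (Function.update y j true) - H (Function.update y j false)) := by
        unfold MRT.avgAt; ring
      rw [List.map_cons, List.sum_cons]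
      change |MRT.avgAt p j G y - MRT.avgAt q j H y| ≤ _
      rw [hsplit]
      refine (abs_add_le _ _).trans ((add_le_add_left (abs_add_le _ _) _).trans ?_)
      rw [abs_mul, abs_mul, abs_mul, abs_of_nonneg (hp j).1,
        abs_of_nonneg (sub_nonneg.2 (hp j).2)]
      have h₁ := mul_le_mul_of_nonneg_left (ih (Function.update y j true)) (hp j).1
      have h₂ := mul_le_mul_of_nonneg_left (ih (Function.update y j false))
        (sub_nonneg.2 (hp j).2)
      have h₃ := mul_le_mul_of_nonneg_left hH (abs_nonneg (p j - q j))
      linarith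
  have := key (List.finRange n) (fun _ => false)
  rwa [foldr_avgAt_finRange hp, foldr_avgAt_finRange hq, ← Fin.sum_univ_def] at this

end CoordLipschitz

section Variance

def variance (ν g : State n → ℝ) : ℝ := expect ν (fun y => g y ^ 2) - expect ν g ^ 2

lemma IsDist.expect_mul_sub_mul_expect (hν : IsDist ν) :
    expect ν (fun y => g y * u y) - expect ν g * expect ν u =
      ∑ y, ν y * ((g y - expect ν g) * (u y - expect ν u)) := by
  have e : ∀ y, ν y * ((g y - expect ν g) * (u y - expect ν u)) = ν y * (g y * u y) -
      expect ν u * (ν y * g y) - expect ν g * (ν y * u y) + expect ν g * expect ν u * ν y :=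
    fun y => by ring
  simp only [e, sum_add_distrib, sum_sub_distrib, ← mul_sum, hν.2]
  unfold expect; ring

lemma IsDist.variance_eq (hν : IsDist ν) :
    variance ν g = ∑ y, ν y * (g y - expect ν g) ^ 2 := by
  simpa [variance, sq] using hν.expect_mul_sub_mul_expect (g := g) (u := g)

lemma IsDist.variance_nonneg (hν : IsDist ν) : 0 ≤ variance ν g := by
  rw [hν.variance_eq]
  exact sum_nonneg fun y _ => mul_nonneg (hν.1 y) (sq_nonneg _)

lemma IsDist.abs_cov_le (hν : IsDist ν) :
    |expect ν (fun y => g y * u y) - expect ν g * expect ν u| ≤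
      √(variance ν g * variance ν u) := by
  rw [← Real.sqrt_sq_eq_abs, hν.expect_mul_sub_mul_expect, hν.variance_eq, hν.variance_eq]
  exact Real.sqrt_le_sqrt (sum_sq_le_sum_mul_sum_of_sq_le_mul _
    (fun y _ => mul_nonneg (hν.1 y) (sq_nonneg _)) (fun y _ => mul_nonneg (hν.1 y) (sq_nonneg _))
    fun y _ => le_of_eq (by ring))

lemma CoordLipschitzWith.abs_expect_sub_le (hν : IsDist ν) (hg : CoordLipschitzWith c g)
    (hc : ∀ l, 0 ≤ c l) (y₀ : State n) : |expect ν g - g y₀| ≤ ∑ l, c l := by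
  rw [← hν.expect_const (g y₀), ← expect_sub]
  exact hν.abs_expect_le fun y => hg.abs_sub_le_sum hc y y₀

lemma CoordLipschitzWith.variance_le_sq_sum (hν : IsDist ν) (hg : CoordLipschitzWith c g)
    (hc : ∀ l, 0 ≤ c l) : variance ν g ≤ (∑ l, c l) ^ 2 := by
  rw [hν.variance_eq, ← mul_one ((∑ l, c l) ^ 2), ← hν.2, mul_sum]
  refine sum_le_sum fun y _ => ?_
  rw [mul_comm]
  refine mul_le_mul_of_nonneg_right ?_ (hν.1 y)
  rw [← sq_abs, abs_sub_comm]
  exact pow_le_pow_left₀ (abs_nonneg _) (hg.abs_expect_sub_le hν hc y) 2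

lemma avgAt_sq_sub_sq (p : Fin n → ℝ) (j : Fin n) (g : State n → ℝ) (y : State n) :
    avgAt p j (fun z => g z ^ 2) y - avgAt p j g y ^ 2 =
      p j * (1 - p j) * (g (Function.update y j true) - g (Function.update y j false)) ^ 2 := by
  unfold avgAt; ring

/-- Efron–Stein inequality for a product of Bernoulli laws. -/
lemma CoordLipschitzWith.variance_prodLaw_le (hg : CoordLipschitzWith c g) (hc : ∀ l, 0 ≤ c l)
    (hp : ∀ j, p j ∈ Set.Icc (0 : ℝ) 1) : variance (prodLaw p) g ≤ (∑ l, c l ^ 2) / 4 := by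
  have hν := isDist_prodLaw hp
  have key : ∀ js : List (Fin n), expect (prodLaw p) (fun y => g y ^ 2) -
      expect (prodLaw p) (fun y => js.foldr (MRT.avgAt p) g y ^ 2) ≤
        (js.map fun l => c l ^ 2 / 4).sum := by
    intro js
    induction js with
    | nil => simp
    | cons j js ih =>
      set G := js.foldr (MRT.avgAt p) g
      have hG := (hg.foldr_avgAt hc hp js).abs_sub_update_le
      have hvar : ∀ y, MRT.avgAt p j (fun z => G z ^ 2) y - MRT.avgAt p j G y ^ 2 ≤
          c j ^ 2 / 4 := by
        intro y
        rw [avgAt_sq_sub_sq]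
        have h₁ : p j * (1 - p j) ≤ 1 / 4 := by nlinarith [sq_nonneg (p j - 1 / 2)]
        have h₂ : (G (Function.update y j true) - G (Function.update y j false)) ^ 2 ≤
            c j ^ 2 := by
          rw [← sq_abs]; exact pow_le_pow_left₀ (abs_nonneg _) (hG y j) 2
        nlinarith [(hp j).1, (hp j).2,
          sq_nonneg (G (Function.update y j true) - G (Function.update y j false))]
      have hstep := hν.expect_mono hvar
      rw [expect_sub, expect_avgAt, hν.expect_const] at hstep
      rw [List.map_cons, List.sum_cons]
      change _ - expect (prodLaw p) (fun y => MRT.avgAt p j G y ^ 2) ≤ _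
      linarith
  simpa only [variance, foldr_avgAt_finRange hp, hν.expect_const, ← Fin.sum_univ_def, ← sum_div]
    using key (List.finRange n)

end Variance

section OneStep

/-- Entry `(j, l)` bounds how much the success probability of unit `j` moves when
coordinate `l` of the state is flipped. -/
def influenceMat (Nbr : Fin n → Finset (Fin n)) (L B : ℝ) : Matrix (Fin n) (Fin n) ℝ :=
  B • 1 + L • adjMat Nbr

/-- `succProb Nbr f π y j = respMean f j (π j) (y j) (zc Nbr y j)` holds by `rfl`. -/
def respMean (f : Fin n → Bool → Bool → ℝ → ℝ) (j : Fin n) (w : ℝ) (b : Bool) (z : ℝ) : ℝ :=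
  w * f j b true z + (1 - w) * f j b false z

/-- The transition operator on functions; `kernel Nbr f π y` is `prodLaw (succProb Nbr f π y)`
by `rfl`. -/
def nextExpect (Nbr : Fin n → Finset (Fin n)) (f : Fin n → Bool → Bool → ℝ → ℝ)
    (π : Fin n → ℝ) (g : State n → ℝ) (y : State n) : ℝ :=
  expect (prodLaw (succProb Nbr f π y)) g

lemma influenceMat_apply (j l : Fin n) :
    influenceMat Nbr L B j l = (if j = l then B else 0) + if l ∈ Nbr j then L else 0 := by
  simp [influenceMat, adjMat, Matrix.one_apply]

lemma influenceMat_nonneg (hB : 0 ≤ B) (hL : 0 ≤ L) (j l : Fin n) :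
    0 ≤ influenceMat Nbr L B j l := by
  rw [influenceMat_apply]; split_ifs <;> linarith

lemma GoodGraph.influenceMat_symm (hgood : GoodGraph Nbr) (j l : Fin n) :
    influenceMat Nbr L B l j = influenceMat Nbr L B j l := by
  simp only [influenceMat_apply, eq_comm (a := l), hgood.1 j l]

lemma Regular.add_mul_card_le (hreg : Regular Nbr f L B D C) (j : Fin n) :
    B + L * (Nbr j).card ≤ C := by
  have := mul_le_mul_of_nonneg_left (Nat.cast_le.2 (hreg.2.2.2.1 j)) hreg.1
  linarith [hreg.2.2.2.2.1]

lemma Regular.mul_card_le_one (hreg : Regular Nbr f L B D C) (hB : 0 ≤ B) (j : Fin n) :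
    L * (Nbr j).card ≤ 1 := by
  linarith [hreg.add_mul_card_le j, hreg.2.2.2.2.2]

lemma Regular.sum_influenceMat_le (hreg : Regular Nbr f L B D C) (j : Fin n) :
    ∑ l, influenceMat Nbr L B j l ≤ C := by
  have hrow : ∑ l, influenceMat Nbr L B j l = B + L * (Nbr j).card := by
    simp [influenceMat_apply, sum_add_distrib, sum_ite_mem, mul_comm]
  exact hrow ▸ hreg.add_mul_card_le j

lemma vecMul_influenceMat_nonneg (hB : 0 ≤ B) (hL : 0 ≤ L) (hc : ∀ l, 0 ≤ c l) (l : Fin n) :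
    0 ≤ (c ᵥ* influenceMat Nbr L B) l := by
  simp only [Matrix.vecMul, dotProduct]
  exact sum_nonneg fun j _ => mul_nonneg (hc j) (influenceMat_nonneg hB hL j l)

lemma Regular.sum_vecMul_influenceMat_le (hreg : Regular Nbr f L B D C) (hc : ∀ l, 0 ≤ c l) :
    ∑ l, (c ᵥ* influenceMat Nbr L B) l ≤ C * ∑ l, c l :=
  sum_vecMul_le hreg.sum_influenceMat_le hc

lemma Regular.sum_vecMul_influenceMat_sq_le (hreg : Regular Nbr f L B D C)
    (hgood : GoodGraph Nbr) (hB : 0 ≤ B) (c : Fin n → ℝ) :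
    ∑ l, (c ᵥ* influenceMat Nbr L B) l ^ 2 ≤ C ^ 2 * ∑ l, c l ^ 2 :=
  sum_vecMul_sq_le (influenceMat_nonneg hB hreg.1) hreg.sum_influenceMat_le
    (fun l => by simpa only [hgood.influenceMat_symm] using hreg.sum_influenceMat_le l) c

lemma zc_nonneg (Nbr : Fin n → Finset (Fin n)) (y : State n) (i : Fin n) : 0 ≤ zc Nbr y i :=
  sum_nonneg fun _ _ => by split_ifs <;> norm_num

lemma abs_zc_sub_le (x y : State n) (i : Fin n) :
    |zc Nbr x i - zc Nbr y i| ≤ ∑ l ∈ Nbr i, mismatch x y l := by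
  rw [zc, zc, ← sum_sub_distrib]
  refine (abs_sum_le_sum_abs _ _).trans (sum_le_sum fun l _ => ?_)
  cases hx : x l <;> cases hy : y l <;> simp [mismatch, hx, hy]

lemma dependsOn_zc (Nbr : Fin n → Finset (Fin n)) (i : Fin n) :
    DependsOn (fun y => zc Nbr y i) (Nbr i : Set (Fin n)) := fun x y hxy =>
  sum_congr rfl fun l hl => by rw [hxy l hl]

lemma PosF.respMean_mem_Icc (hpos : PosF f) {w : ℝ} (hw : w ∈ Set.Icc (0 : ℝ) 1) (j : Fin n)
    (b : Bool) {z : ℝ} (hz : 0 ≤ z) : respMean f j w b z ∈ Set.Icc (0 : ℝ) 1 := by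
  obtain ⟨h₁, h₁'⟩ := hpos j b true z hz
  obtain ⟨h₀, h₀'⟩ := hpos j b false z hz
  constructor <;> unfold respMean <;> nlinarith [hw.1, hw.2]

lemma PosF.succProb_mem_Icc (hpos : PosF f) (hπ : ∀ j, π j ∈ Set.Icc (0 : ℝ) 1)
    (y : State n) (j : Fin n) : succProb Nbr f π y j ∈ Set.Icc (0 : ℝ) 1 :=
  hpos.respMean_mem_Icc (hπ j) j (y j) (zc_nonneg Nbr y j)

lemma Regular.abs_respMean_sub_le (hreg : Regular Nbr f L B D C) {w : ℝ}
    (hw : w ∈ Set.Icc (0 : ℝ) 1) (j : Fin n) (b : Bool) {z₁ z₂ : ℝ} (hz₁ : 0 ≤ z₁)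
    (hz₂ : 0 ≤ z₂) : |respMean f j w b z₁ - respMean f j w b z₂| ≤ L * |z₁ - z₂| :=
  abs_convexComb_sub_le hw (hreg.2.1 j b true z₁ z₂ hz₁ hz₂) (hreg.2.1 j b false z₁ z₂ hz₁ hz₂)

lemma Regular.abs_respMean_true_sub_false_le (hreg : Regular Nbr f L B D C) {w : ℝ}
    (hw : w ∈ Set.Icc (0 : ℝ) 1) (j : Fin n) {z : ℝ} (hz : 0 ≤ z) :
    |respMean f j w true z - respMean f j w false z| ≤ B :=
  abs_convexComb_sub_le hw (hreg.2.2.1 j true z hz) (hreg.2.2.1 j false z hz)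

lemma Regular.abs_succProb_sub_le (hreg : Regular Nbr f L B D C)
    (hπ : ∀ j, π j ∈ Set.Icc (0 : ℝ) 1) (x y : State n) (j : Fin n) :
    |succProb Nbr f π x j - succProb Nbr f π y j| ≤
      ∑ l, influenceMat Nbr L B j l * mismatch x y l := by
  have hown : |respMean f j (π j) (x j) (zc Nbr x j) - respMean f j (π j) (y j) (zc Nbr x j)| ≤
      B * mismatch x y j := by
    have hB := hreg.abs_respMean_true_sub_false_le (hπ j) j (zc_nonneg Nbr x j)
    cases hx : x j <;> cases hy : y j <;> simp_all [mismatch, abs_sub_comm]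
  have hnbr := hreg.abs_respMean_sub_le (hπ j) j (y j) (zc_nonneg Nbr x j) (zc_nonneg Nbr y j)
  have hsum : ∑ l, influenceMat Nbr L B j l * mismatch x y l =
      B * mismatch x y j + L * ∑ l ∈ Nbr j, mismatch x y l := by
    simp [influenceMat_apply, add_mul, sum_add_distrib, ite_mul, sum_ite_mem, mul_sum]
  rw [hsum]
  calc |succProb Nbr f π x j - succProb Nbr f π y j|
      ≤ |respMean f j (π j) (x j) (zc Nbr x j) - respMean f j (π j) (y j) (zc Nbr x j)| +
        |respMean f j (π j) (y j) (zc Nbr x j) - respMean f j (π j) (y j) (zc Nbr y j)| :=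
        abs_sub_le _ _ _
    _ ≤ B * mismatch x y j + L * ∑ l ∈ Nbr j, mismatch x y l := by
        gcongr
        exact hnbr.trans (mul_le_mul_of_nonneg_left (abs_zc_sub_le x y j) hreg.1)

lemma CoordLipschitzWith.nextExpect (hg : CoordLipschitzWith c g) (hc : ∀ l, 0 ≤ c l)
    (hreg : Regular Nbr f L B D C) (hpos : PosF f) (hπ : ∀ j, π j ∈ Set.Icc (0 : ℝ) 1) :
    CoordLipschitzWith (c ᵥ* influenceMat Nbr L B) (MRT.nextExpect Nbr f π g) := by
  intro x y
  refine (hg.abs_expect_prodLaw_sub_le hc (hpos.succProb_mem_Icc hπ x)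
    (hpos.succProb_mem_Icc hπ y)).trans ?_
  calc ∑ j, c j * |succProb Nbr f π x j - succProb Nbr f π y j|
      ≤ ∑ j, c j * ∑ l, influenceMat Nbr L B j l * mismatch x y l :=
        sum_le_sum fun j _ => mul_le_mul_of_nonneg_left (hreg.abs_succProb_sub_le hπ x y j) (hc j)
    _ = ∑ l, (c ᵥ* influenceMat Nbr L B) l * mismatch x y l := by
        simp only [Matrix.vecMul, dotProduct, mul_sum, sum_mul, mul_assoc]
        exact sum_comm

lemma update_mem_Icc (hπ : ∀ j, π j ∈ Set.Icc (0 : ℝ) 1) (hγ : γ ∈ Set.Icc (0 : ℝ) 1)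
    (j : Fin n) : Function.update π i γ j ∈ Set.Icc (0 : ℝ) 1 := by
  rcases eq_or_ne j i with rfl | hj
  · simpa using hγ
  · simpa [Function.update_of_ne hj] using hπ j

lemma CoordLipschitzWith.abs_nextExpect_sub_update_le (hg : CoordLipschitzWith c g)
    (hc : ∀ l, 0 ≤ c l) (hpos : PosF f) (hπ : ∀ j, π j ∈ Set.Icc (0 : ℝ) 1)
    (hγ : γ ∈ Set.Icc (0 : ℝ) 1) (y : State n) :
    |MRT.nextExpect Nbr f π g y - MRT.nextExpect Nbr f (Function.update π i γ) g y| ≤ c i := by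
  have hπ' := update_mem_Icc (i := i) hπ hγ
  refine (hg.abs_expect_prodLaw_sub_le hc (hpos.succProb_mem_Icc hπ y)
    (hpos.succProb_mem_Icc hπ' y)).trans ?_
  rw [sum_eq_single i (fun j _ hj => by simp [succProb, Function.update_of_ne hj]) (by simp)]
  have h₁ := hpos.succProb_mem_Icc (Nbr := Nbr) hπ y i
  have h₂ := hpos.succProb_mem_Icc (Nbr := Nbr) hπ' y i
  exact mul_le_of_le_one_right (hc i)
    (abs_sub_le_iff.2 ⟨by linarith [h₁.2, h₂.1], by linarith [h₁.1, h₂.2]⟩)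

lemma expect_prodLaw_succProb_mul_Yi (hg : DependsOn g ({i}ᶜ : Set (Fin n))) (y : State n) :
    nextExpect Nbr f π (fun y => g y * Yi i y) y =
      nextExpect Nbr f π g y * nextExpect Nbr f π (Yi i) y := by
  simp only [nextExpect, expect_prodLaw_mul_Yi hg, expect_prodLaw_Yi, mul_comm]

end OneStep

section Stationary

lemma IsStationary.expect_nextExpect (hst : IsStationary Nbr f π μ) (g : State n → ℝ) :
    expect μ (nextExpect Nbr f π g) = expect μ g := by
  conv_rhs => rw [← hst.2]
  simp only [expect, nextExpect, step, kernel, prodLaw, sum_mul, mul_sum, mul_assoc]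
  exact sum_comm

lemma IsStationary.variance_le_add (hst : IsStationary Nbr f π μ) (hpos : PosF f)
    (hπ : ∀ j, π j ∈ Set.Icc (0 : ℝ) 1) (hg : CoordLipschitzWith c g) (hc : ∀ l, 0 ≤ c l) :
    variance μ g ≤ (∑ l, c l ^ 2) / 4 + variance μ (nextExpect Nbr f π g) := by
  have hpt : ∀ y, nextExpect Nbr f π (fun z => g z ^ 2) y ≤
      (∑ l, c l ^ 2) / 4 + nextExpect Nbr f π g y ^ 2 := fun y => by
    have := hg.variance_prodLaw_le hc (hpos.succProb_mem_Icc (Nbr := Nbr) hπ y)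
    unfold variance at this
    unfold nextExpect
    linarith
  have hmean := hst.1.expect_mono hpt
  rw [expect_add, hst.1.expect_const, hst.expect_nextExpect] at hmean
  unfold variance
  rw [← hst.expect_nextExpect g]
  linarith

/-- Each step of the chain contributes an Efron–Stein term `‖c‖₂² / 4`, after which the
Lipschitz constants have contracted by `C` in `ℓ²`. -/
lemma IsStationary.variance_le (hst : IsStationary Nbr f π μ) (hreg : Regular Nbr f L B D C)
    (hgood : GoodGraph Nbr) (hpos : PosF f) (hπ : ∀ j, π j ∈ Set.Icc (0 : ℝ) 1) (hB : 0 ≤ B)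
    (hC : 0 ≤ C) (hg : CoordLipschitzWith c g) (hc : ∀ l, 0 ≤ c l) :
    variance μ g ≤ (∑ l, c l ^ 2) / (4 * (1 - C ^ 2)) := by
  have hC₁ : C ^ 2 < 1 := by nlinarith [hreg.2.2.2.2.2]
  refine le_of_forall_le_add_mul_pow (b := (∑ l, c l) ^ 2) (sq_nonneg C) hC₁ fun m => ?_
  induction m generalizing g c with
  | zero =>
    have : 0 ≤ (∑ l, c l ^ 2) / (4 * (1 - C ^ 2)) :=
      div_nonneg (sum_nonneg fun l _ => sq_nonneg _) (by linarith)
    simpa using (hg.variance_le_sq_sum hst.1 hc).trans (le_add_of_nonneg_left this)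
  | succ m ih =>
    let c' := c ᵥ* influenceMat Nbr L B
    have hc' : ∀ l, 0 ≤ c' l := vecMul_influenceMat_nonneg hB hreg.1 hc
    have hnext : variance μ (nextExpect Nbr f π g) ≤
        (∑ l, c' l ^ 2) / (4 * (1 - C ^ 2)) + (∑ l, c' l) ^ 2 * (C ^ 2) ^ m :=
      ih (hg.nextExpect hc hreg hpos hπ) hc'
    have hsq : (∑ l, c' l ^ 2) / (4 * (1 - C ^ 2)) ≤
        C ^ 2 * (∑ l, c l ^ 2) / (4 * (1 - C ^ 2)) :=
      div_le_div_of_nonneg_right (hreg.sum_vecMul_influenceMat_sq_le hgood hB c) (by linarith)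
    have hsum : (∑ l, c' l) ^ 2 ≤ C ^ 2 * (∑ l, c l) ^ 2 := by
      rw [← mul_pow]
      exact pow_le_pow_left₀ (sum_nonneg fun l _ => hc' l)
        (hreg.sum_vecMul_influenceMat_le hc) 2
    have hgeom : (∑ l, c l ^ 2) / 4 + C ^ 2 * (∑ l, c l ^ 2) / (4 * (1 - C ^ 2)) =
        (∑ l, c l ^ 2) / (4 * (1 - C ^ 2)) := by
      field_simp [(by linarith : (1 - C ^ 2) ≠ 0)]; ring
    have htail := mul_le_mul_of_nonneg_right hsum (pow_nonneg (sq_nonneg C) m)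
    rw [pow_succ' (C ^ 2) m]
    linarith [hst.variance_le_add hpos hπ hg hc]

lemma IsStationary.variance_nextExpect_le (hst : IsStationary Nbr f π μ)
    (hreg : Regular Nbr f L B D C) (hgood : GoodGraph Nbr) (hpos : PosF f)
    (hπ : ∀ j, π j ∈ Set.Icc (0 : ℝ) 1) (hB : 0 ≤ B) (hC : 0 ≤ C)
    (hg : CoordLipschitzWith c g) (hc : ∀ l, 0 ≤ c l) :
    variance μ (nextExpect Nbr f π g) ≤ (∑ l, c l ^ 2) / (4 * (1 - C ^ 2)) := by
  have hC₁ : C ^ 2 < 1 := by nlinarith [hreg.2.2.2.2.2]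
  refine (hst.variance_le hreg hgood hpos hπ hB hC (hg.nextExpect hc hreg hpos hπ)
    (vecMul_influenceMat_nonneg hB hreg.1 hc)).trans
    (div_le_div_of_nonneg_right ?_ (by linarith))
  exact (hreg.sum_vecMul_influenceMat_sq_le hgood hB c).trans
    (mul_le_of_le_one_left (sum_nonneg fun l _ => sq_nonneg _) hC₁.le)

/-- Changing `π i` costs at most `c i ≤ ‖c‖₂` in the first step; the remaining steps see
Lipschitz constants contracted by `C` in `ℓ²`. -/
lemma IsStationary.abs_expect_sub_le_of_update (hst : IsStationary Nbr f π μ)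
    (hst' : IsStationary Nbr f (Function.update π i γ) μ') (hreg : Regular Nbr f L B D C)
    (hgood : GoodGraph Nbr) (hpos : PosF f) (hπ : ∀ j, π j ∈ Set.Icc (0 : ℝ) 1)
    (hγ : γ ∈ Set.Icc (0 : ℝ) 1) (hB : 0 ≤ B) (hC : 0 ≤ C) (hg : CoordLipschitzWith c g)
    (hc : ∀ l, 0 ≤ c l) :
    |expect μ g - expect μ' g| ≤ √(∑ l, c l ^ 2) / (1 - C) := by
  have hC₁ : 0 < 1 - C := sub_pos.2 hreg.2.2.2.2.2
  refine le_of_forall_le_add_mul_pow (b := 2 * ∑ l, c l) hC hreg.2.2.2.2.2 fun m => ?_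
  induction m generalizing g c with
  | zero =>
    have h₁ := hg.abs_expect_sub_le hst.1 hc (fun _ => false)
    have h₂ := hg.abs_expect_sub_le hst'.1 hc (fun _ => false)
    have := div_nonneg (Real.sqrt_nonneg (∑ l, c l ^ 2)) hC₁.le
    rw [abs_le] at h₁ h₂ ⊢
    constructor <;> simp only [pow_zero, mul_one] <;> linarith [h₁.1, h₁.2, h₂.1, h₂.2]
  | succ m ih =>
    set π' := Function.update π i γ
    let c' := c ᵥ* influenceMat Nbr L B
    have hc' : ∀ l, 0 ≤ c' l := vecMul_influenceMat_nonneg hB hreg.1 hc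
    have hnext : |expect μ (nextExpect Nbr f π' g) - expect μ' (nextExpect Nbr f π' g)| ≤
        √(∑ l, c' l ^ 2) / (1 - C) + 2 * (∑ l, c' l) * C ^ m :=
      ih (hg.nextExpect hc hreg hpos (update_mem_Icc hπ hγ)) hc'
    have hci : c i ≤ √(∑ l, c l ^ 2) := by
      simpa [abs_of_nonneg (hc i)] using Real.abs_le_sqrt
        (single_le_sum (f := fun l => c l ^ 2) (fun l _ => sq_nonneg _) (mem_univ i))
    have hfirst : |expect μ (fun y => nextExpect Nbr f π g y - nextExpect Nbr f π' g y)| ≤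
        √(∑ l, c l ^ 2) :=
      hst.1.abs_expect_le fun y => (hg.abs_nextExpect_sub_update_le hc hpos hπ hγ y).trans hci
    have hsq : √(∑ l, c' l ^ 2) ≤ C * √(∑ l, c l ^ 2) := by
      rw [← Real.sqrt_sq hC, ← Real.sqrt_mul (sq_nonneg C)]
      exact Real.sqrt_le_sqrt (hreg.sum_vecMul_influenceMat_sq_le hgood hB c)
    have hsum : 2 * (∑ l, c' l) * C ^ m ≤ 2 * (∑ l, c l) * C ^ (m + 1) := by
      rw [pow_succ', ← mul_assoc, mul_assoc 2, mul_comm _ C, ← mul_assoc]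
      exact mul_le_mul_of_nonneg_right (by linarith [hreg.sum_vecMul_influenceMat_le hc])
        (pow_nonneg hC m)
    have hgeom : √(∑ l, c l ^ 2) + C * √(∑ l, c l ^ 2) / (1 - C) =
        √(∑ l, c l ^ 2) / (1 - C) := by
      field_simp; ring
    have hsplit : expect μ g - expect μ' g =
        expect μ (fun y => nextExpect Nbr f π g y - nextExpect Nbr f π' g y) +
          (expect μ (nextExpect Nbr f π' g) - expect μ' (nextExpect Nbr f π' g)) := by
      rw [expect_sub, hst.expect_nextExpect, hst'.expect_nextExpect]; ring
    rw [hsplit]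
    refine (abs_add_le _ _).trans ?_
    linarith [div_le_div_of_nonneg_right hsq hC₁.le]

lemma IsStationary.cov_Yi_eq (hst : IsStationary Nbr f π μ)
    (hg : DependsOn g ({i}ᶜ : Set (Fin n))) :
    expect μ (fun y => g y * Yi i y) - expect μ g * expect μ (Yi i) =
      expect μ (fun y => nextExpect Nbr f π g y * nextExpect Nbr f π (Yi i) y) -
        expect μ (nextExpect Nbr f π g) * expect μ (nextExpect Nbr f π (Yi i)) := by
  rw [← hst.expect_nextExpect (fun y => g y * Yi i y),
    funext (expect_prodLaw_succProb_mul_Yi hg), hst.expect_nextExpect, hst.expect_nextExpect]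

end Stationary

section Neighbourhood

lemma CoordLipschitzWith.comp_zc {φ : ℝ → ℝ} {K : ℝ} (hK : 0 ≤ K)
    (hφ : ∀ z₁ z₂, 0 ≤ z₁ → 0 ≤ z₂ → |φ z₁ - φ z₂| ≤ K * |z₁ - z₂|) :
    CoordLipschitzWith (fun l => if l ∈ Nbr i then K else 0) (fun y => φ (zc Nbr y i)) := by
  intro x y
  refine (hφ _ _ (zc_nonneg Nbr x i) (zc_nonneg Nbr y i)).trans ?_
  simp only [ite_mul, zero_mul, sum_ite_mem, univ_inter, ← mul_sum]
  exact mul_le_mul_of_nonneg_left (abs_zc_sub_le x y i) hK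

lemma sum_sq_ite_mem_le {κ : ℝ} (hL : 0 ≤ L) (hcard : L * (Nbr i).card ≤ 1) :
    ∑ l, (if l ∈ Nbr i then κ * L else 0) ^ 2 ≤ (κ * √L) ^ 2 := by
  have hsum : ∑ l, (if l ∈ Nbr i then κ * L else 0) ^ 2 = κ ^ 2 * L * (L * (Nbr i).card) := by
    simp only [ite_pow, zero_pow two_ne_zero, sum_ite_mem, univ_inter, sum_const, nsmul_eq_mul]
    ring
  rw [hsum, mul_pow, Real.sq_sqrt hL]
  exact mul_le_of_le_one_right (by positivity) hcard

lemma IsStationary.abs_expect_comp_zc_sub_le (hst : IsStationary Nbr f π μ)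
    (hst' : IsStationary Nbr f (Function.update π i γ) μ') (hreg : Regular Nbr f L B D C)
    (hgood : GoodGraph Nbr) (hpos : PosF f) (hπ : ∀ j, π j ∈ Set.Icc (0 : ℝ) 1)
    (hγ : γ ∈ Set.Icc (0 : ℝ) 1) (hB : 0 ≤ B) (hC : 0 ≤ C) {φ : ℝ → ℝ} {κ : ℝ} (hκ : 0 ≤ κ)
    (hφ : ∀ z₁ z₂, 0 ≤ z₁ → 0 ≤ z₂ → |φ z₁ - φ z₂| ≤ κ * L * |z₁ - z₂|) :
    |expect μ' (fun y => φ (zc Nbr y i)) - expect μ (fun y => φ (zc Nbr y i))| ≤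
      κ * √L / (1 - C) := by
  have hκL := mul_nonneg hκ hreg.1
  rw [abs_sub_comm]
  refine (hst.abs_expect_sub_le_of_update hst' hreg hgood hpos hπ hγ hB hC
    (CoordLipschitzWith.comp_zc hκL hφ) fun _ => ite_nonneg hκL le_rfl).trans
    (div_le_div_of_nonneg_right ?_ (sub_nonneg.2 hreg.2.2.2.2.2.le))
  rw [← Real.sqrt_sq (mul_nonneg hκ (Real.sqrt_nonneg L))]
  exact Real.sqrt_le_sqrt (sum_sq_ite_mem_le hreg.1 (hreg.mul_card_le_one hB i))

/-- By stationarity the covariance equals the covariance one step ahead, where the two factors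
are conditionally independent given the current state; both one-step means have small
stationary variance. -/
lemma IsStationary.abs_cov_comp_zc_Yi_le (hst : IsStationary Nbr f π μ)
    (hreg : Regular Nbr f L B D C) (hgood : GoodGraph Nbr) (hpos : PosF f)
    (hπ : ∀ j, π j ∈ Set.Icc (0 : ℝ) 1) (hB : 0 ≤ B) (hC : 0 ≤ C) {φ : ℝ → ℝ} {κ : ℝ}
    (hκ : 0 ≤ κ) (hφ : ∀ z₁ z₂, 0 ≤ z₁ → 0 ≤ z₂ → |φ z₁ - φ z₂| ≤ κ * L * |z₁ - z₂|) :
    |expect μ (fun y => φ (zc Nbr y i) * Yi i y) -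
        expect μ (fun y => φ (zc Nbr y i)) * expect μ (Yi i)| ≤ κ * √L / (4 * (1 - C)) := by
  have hκL := mul_nonneg hκ hreg.1
  have hC₁ : 0 < 1 - C := sub_pos.2 hreg.2.2.2.2.2
  have hC₂ : 1 - C ≤ 1 - C ^ 2 := by nlinarith
  have hd : 0 < 4 * (1 - C ^ 2) := by linarith
  have hdep : DependsOn (fun y => φ (zc Nbr y i)) ({i}ᶜ : Set (Fin n)) := fun x y hxy =>
    congrArg φ (dependsOn_zc Nbr i fun l hl => hxy l fun h => hgood.2 i (h ▸ hl))
  have hV₁ := (hst.variance_nextExpect_le hreg hgood hpos hπ hB hC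
    (CoordLipschitzWith.comp_zc (Nbr := Nbr) (i := i) hκL hφ) fun _ => ite_nonneg hκL le_rfl).trans
    (div_le_div_of_nonneg_right (sum_sq_ite_mem_le hreg.1 (hreg.mul_card_le_one hB i)) hd.le)
  have hV₂ := hst.variance_nextExpect_le hreg hgood hpos hπ hB hC (coordLipschitzWith_Yi i)
    fun l => by by_cases h : l = i <;> simp [h]
  rw [show ∑ l, (Pi.single i 1 : Fin n → ℝ) l ^ 2 = 1 by simp [Pi.single_apply]] at hV₂
  rw [hst.cov_Yi_eq hdep]
  refine hst.1.abs_cov_le.trans ((Real.sqrt_le_sqrt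
    (mul_le_mul hV₁ hV₂ hst.1.variance_nonneg (by positivity))).trans ?_)
  rw [show (κ * √L) ^ 2 / (4 * (1 - C ^ 2)) * (1 / (4 * (1 - C ^ 2))) =
    (κ * √L / (4 * (1 - C ^ 2))) ^ 2 by ring, Real.sqrt_sq (by positivity)]
  gcongr

end Neighbourhood

section DirectEffect

lemma aF_add_bF_mul (f : Fin n → Bool → Bool → ℝ → ℝ) (i : Fin n) (γ z : ℝ) :
    aF f i z + bF f i z * γ = respMean f i γ false z := by
  simp only [aF, bF, respMean]; ring

lemma one_sub_cF_sub_dF_mul (f : Fin n → Bool → Bool → ℝ → ℝ) (i : Fin n) (γ z : ℝ) :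
    1 - cF f i z - dF f i z * γ = 1 - (respMean f i γ true z - respMean f i γ false z) := by
  simp only [cF, dF, respMean]; ring

lemma Regular.abs_respMean_gap_sub_le (hreg : Regular Nbr f L B D C)
    (hγ : γ ∈ Set.Icc (0 : ℝ) 1) (i : Fin n) : ∀ z₁ z₂, 0 ≤ z₁ → 0 ≤ z₂ →
      |(respMean f i γ true z₁ - respMean f i γ false z₁) -
        (respMean f i γ true z₂ - respMean f i γ false z₂)| ≤ 2 * L * |z₁ - z₂| := by
  intro z₁ z₂ hz₁ hz₂
  have h₁ := hreg.abs_respMean_sub_le hγ i true hz₁ hz₂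
  have h₀ := hreg.abs_respMean_sub_le hγ i false hz₁ hz₂
  calc _ = |(respMean f i γ true z₁ - respMean f i γ true z₂) -
          (respMean f i γ false z₁ - respMean f i γ false z₂)| := by ring_nf
    _ ≤ |respMean f i γ true z₁ - respMean f i γ true z₂| +
          |respMean f i γ false z₁ - respMean f i γ false z₂| := abs_sub _ _
    _ ≤ 2 * L * |z₁ - z₂| := by linarith

lemma Regular.expect_respMean_gap_le (hreg : Regular Nbr f L B D C) (hν : IsDist ν)
    (hγ : γ ∈ Set.Icc (0 : ℝ) 1) (i : Fin n) :
    expect ν (fun y => respMean f i γ true (zc Nbr y i) - respMean f i γ false (zc Nbr y i)) ≤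
      C := by
  have hBC : B ≤ C := by
    linarith [hreg.add_mul_card_le i, mul_nonneg hreg.1 (Nat.cast_nonneg (Nbr i).card)]
  exact (le_of_abs_le (hν.abs_expect_le fun y =>
    hreg.abs_respMean_true_sub_false_le hγ i (zc_nonneg Nbr y i))).trans hBC

lemma IsStationary.expect_Yi_eq (hst' : IsStationary Nbr f (Function.update π i γ) μ') :
    expect μ' (Yi i) = expect μ' (fun y => respMean f i γ false (zc Nbr y i)) +
      expect μ' (fun y => (respMean f i γ true (zc Nbr y i) -
        respMean f i γ false (zc Nbr y i)) * Yi i y) := by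
  rw [← hst'.expect_nextExpect, ← expect_add]
  refine congrArg _ (funext fun y => ?_)
  rw [nextExpect, expect_prodLaw_Yi]
  simp only [succProb, Function.update_self, respMean, Yi]
  cases y i <;> simp

end DirectEffect

end MRT

end

open MRT in
/-- characterization of the long-term direct effect: there is a constant `K`
depending only on `B` and `C` such that for every unit `i` and every `γ ∈ (0,1)`, the
stationary mean of `Y_i` under the tilted treatment probabilities `(π_i = γ, π_{−i})`
is within `K √L` of `E_{μ(π)}[a_i + b_i γ] / E_{μ(π)}[1 − c_i − d_i γ]`. -/
theorem lde_characterization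
    (B C : ℝ) (hB0 : 0 ≤ B) (hC0 : 0 ≤ C) (hC1 : C < 1) :
    ∃ K : ℝ, 0 < K ∧
      ∀ (n : ℕ) (Nbr : Fin n → Finset (Fin n)) (f : Fin n → Bool → Bool → ℝ → ℝ)
        (π : Fin n → ℝ) (L : ℝ) (D : ℕ),
        GoodGraph Nbr → PosF f → (∀ i, π i ∈ Set.Ioo (0 : ℝ) 1) →
        Regular Nbr f L B D C →
        ∀ (i : Fin n) (γ : ℝ), γ ∈ Set.Ioo (0 : ℝ) 1 →
        ∀ (μ μi : State n → ℝ),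
          IsStationary Nbr f π μ →
          IsStationary Nbr f (Function.update π i γ) μi →
          |expect μi (Yi i) -
              expect μ (fun s => aF f i (zc Nbr s i) + bF f i (zc Nbr s i) * γ) /
                expect μ (fun s => 1 - cF f i (zc Nbr s i) - dF f i (zc Nbr s i) * γ)| ≤
            K * Real.sqrt L := by
  have hC : 0 < 1 - C := sub_pos.2 hC1
  refine ⟨4 / (1 - C) ^ 2, by positivity, ?_⟩
  intro n Nbr f π L D hgood hpos hπ hreg i γ hγ μ μi hst hsti
  replace hπ : ∀ j, π j ∈ Set.Icc (0 : ℝ) 1 := fun j => Set.Ioo_subset_Icc_self (hπ j)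
  replace hγ : γ ∈ Set.Icc (0 : ℝ) 1 := Set.Ioo_subset_Icc_self hγ
  have hgap := hreg.abs_respMean_gap_sub_le hγ i
  have hΔm := hst.abs_expect_comp_zc_sub_le hsti hreg hgood hpos hπ hγ hB0 hC0 zero_le_one
    fun _ _ hz₁ hz₂ => by simpa using hreg.abs_respMean_sub_le hγ i false hz₁ hz₂
  have hΔg := hst.abs_expect_comp_zc_sub_le hsti hreg hgood hpos hπ hγ hB0 hC0 zero_le_two hgap
  have hcov := hsti.abs_cov_comp_zc_Yi_le (i := i) hreg hgood hpos (update_mem_Icc hπ hγ) hB0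
    hC0 zero_le_two hgap
  set gap : State n → ℝ := fun y => respMean f i γ true (zc Nbr y i) -
    respMean f i γ false (zc Nbr y i)
  simp only [aF_add_bF_mul, one_sub_cF_sub_dF_mul]
  rw [expect_sub, hst.1.expect_const]
  refine (abs_sub_div_one_sub_le (g' := expect μi gap) (hsti.1.expect_Yi_mem_Icc i)
    (hreg.expect_respMean_gap_le hst.1 hγ i) hC1 hsti.expect_Yi_eq).trans ?_
  calc _ ≤ (1 * √L / (1 - C) + 2 * √L / (1 - C) + 2 * √L / (4 * (1 - C))) / (1 - C) := by
        gcongr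
    _ = 7 / 2 / (1 - C) ^ 2 * √L := by field_simp; ring
    _ ≤ 4 / (1 - C) ^ 2 * √L := by gcongr; norm_num
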